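/- arXiv:2401.02947 — 3 statements merged into one kernel-verified Lean document; each statement's English description precedes it below -/
import Mathlib

section
/- Let H be a length heart in a triangulated category D with finitely many isomorphism classes of simple objects, let U be its set of simples and S ⊆ U. If there exists a stability condition σ = (Z, P) with P(0,1] = H, P(1) = ⟨S⟩ and P(0, φ] = S^⊥ ∩ H for some 0 < φ < 1, then the right simple tilt K = (S^⊥ ∩ H) * ⟨S⟩[-1] equals P[0, φ] and is a length heart. -/
open CategoryTheory Category Limits Pretriangulated

universe v u

namespace SMPaper

variable {C : Type u} [Category.{v} C] [Preadditive C] [HasZeroObject C] [HasShift C ℤ]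
  [∀ n : ℤ, (shiftFunctor C n).Additive] [Pretriangulated C]

/-- The image of a set of objects under the `n`-th shift, closed under isomorphism. -/
def shiftSet (S : Set C) (n : ℤ) : Set C :=
  {d | ∃ s ∈ S, Nonempty ((shiftFunctor C n).obj s ≅ d)}

/-- The extension product `A * B`: objects `d` fitting in a triangle `a → d → b → a[1]`. -/
def star (A B : Set C) : Set C :=
  {d | ∃ (a b : C) (f : a ⟶ d) (g : d ⟶ b) (h : b ⟶ (shiftFunctor C (1 : ℤ)).obj a),
    a ∈ A ∧ b ∈ B ∧ Triangle.mk f g h ∈ (distTriang C)}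

/-- `Hom(A, B) = 0`. -/
def homOrth (A B : Set C) : Prop :=
  ∀ ⦃a : C⦄, a ∈ A → ∀ ⦃b : C⦄, b ∈ B → ∀ f : a ⟶ b, f = 0

/-- Right perpendicular `S^⊥`. -/
def rPerp (S : Set C) : Set C := {d | ∀ s ∈ S, ∀ f : s ⟶ d, f = 0}

/-- Left perpendicular `^⊥S`. -/
def lPerp (S : Set C) : Set C := {d | ∀ s ∈ S, ∀ f : d ⟶ s, f = 0}

def isoClosure (S : Set C) : Set C := {d | ∃ s ∈ S, Nonempty (s ≅ d)}

/-- The extension closure of a set of objects. -/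
inductive ExtClosureP (S : Set C) : C → Prop
  | of (s : C) : s ∈ S → ExtClosureP S s
  | zero (z : C) : IsZero z → ExtClosureP S z
  | iso (x y : C) : (x ≅ y) → ExtClosureP S x → ExtClosureP S y
  | ext (a d b : C) (f : a ⟶ d) (g : d ⟶ b) (h : b ⟶ (shiftFunctor C (1 : ℤ)).obj a) :
      Triangle.mk f g h ∈ (distTriang C) → ExtClosureP S a → ExtClosureP S b → ExtClosureP S d

def extClosure (S : Set C) : Set C := {d | ExtClosureP S d}

/-- `⟨S⟩[i] * ⟨S⟩[i-1] * ⋯ * ⟨S⟩[i-n]`. -/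
def prodDown (S : Set C) : ℤ → ℕ → Set C
  | i, 0 => shiftSet (extClosure S) i
  | i, n + 1 => star (shiftSet (extClosure S) i) (prodDown S (i - 1) n)

/-- `susp S = ⋃_{n ≥ 0} ⟨S⟩[n] * ⋯ * ⟨S⟩[0]`. -/
def suspSet (S : Set C) : Set C := {d | ∃ n : ℕ, d ∈ prodDown S n n}

/-- `cosusp S = ⋃_{n ≥ 0} ⟨S⟩[0] * ⋯ * ⟨S⟩[-n]`. -/
def cosuspSet (S : Set C) : Set C := {d | ∃ n : ℕ, d ∈ prodDown S 0 n}

/-- `cosusp (S[-1]) = ⋃_{n ≥ 0} ⟨S⟩[-1] * ⋯ * ⟨S⟩[-1-n]`. -/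
def cosuspNeg (S : Set C) : Set C := {d | ∃ n : ℕ, d ∈ prodDown S (-1) n}

/-- A t-structure `(X, Y)`: full (iso-closed, containing zero) subcategories with
`Hom(X, Y) = 0`, `D = X * Y` and `X[1] ⊆ X`. -/
structure IsTStructure (X Y : Set C) : Prop where
  isoX : ∀ ⦃x y : C⦄, (x ≅ y) → x ∈ X → y ∈ X
  isoY : ∀ ⦃x y : C⦄, (x ≅ y) → x ∈ Y → y ∈ Y
  zeroX : ∀ z : C, IsZero z → z ∈ X
  zeroY : ∀ z : C, IsZero z → z ∈ Y
  hom : homOrth X Y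
  gen : ∀ d : C, d ∈ star X Y
  shift : shiftSet X 1 ⊆ X

/-- A co-t-structure `(W, X)`. -/
structure IsCoTStructure (W X : Set C) : Prop where
  isoW : ∀ ⦃x y : C⦄, (x ≅ y) → x ∈ W → y ∈ W
  isoX : ∀ ⦃x y : C⦄, (x ≅ y) → x ∈ X → y ∈ X
  zeroW : ∀ z : C, IsZero z → z ∈ W
  zeroX : ∀ z : C, IsZero z → z ∈ X
  hom : homOrth W X
  gen : ∀ d : C, d ∈ star W X
  shift : shiftSet W (-1) ⊆ W

/-- The heart `X ∩ Y[1]` of a t-structure. -/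
def heart (X Y : Set C) : Set C := X ∩ shiftSet Y 1

/-- Boundedness of a torsion pair/t-structure. -/
def IsBoundedTS (X Y : Set C) : Prop :=
  ∀ d : C, (∃ n : ℤ, d ∈ shiftSet X n) ∧ (∃ n : ℤ, d ∈ shiftSet Y n)

/-- A torsion pair `(T, F)` in the heart `H`: `Hom(T, F) = 0` and every object of `H`
is an extension of an object of `F` by an object of `T`. -/
structure IsTorsionPairIn (H T F : Set C) : Prop where
  isoT : ∀ ⦃x y : C⦄, (x ≅ y) → x ∈ T → y ∈ T
  isoF : ∀ ⦃x y : C⦄, (x ≅ y) → x ∈ F → y ∈ F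
  subT : T ⊆ H
  subF : F ⊆ H
  hom : homOrth T F
  gen : H ⊆ star T F

/-- `f : x → d` is a right `S`-approximation. -/
def IsRightApprox (S : Set C) {x d : C} (f : x ⟶ d) : Prop :=
  x ∈ S ∧ ∀ ⦃x' : C⦄, x' ∈ S → ∀ g : x' ⟶ d, ∃ h : x' ⟶ x, h ≫ f = g

/-- `f : d → x` is a left `S`-approximation. -/
def IsLeftApprox (S : Set C) {d x : C} (f : d ⟶ x) : Prop :=
  x ∈ S ∧ ∀ ⦃x' : C⦄, x' ∈ S → ∀ g : d ⟶ x', ∃ h : x ⟶ x', f ≫ h = g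

def RightMinimal {x d : C} (f : x ⟶ d) : Prop :=
  ∀ β : x ⟶ x, β ≫ f = f → IsIso β

def LeftMinimal {d x : C} (f : d ⟶ x) : Prop :=
  ∀ β : x ⟶ x, f ≫ β = f → IsIso β

def HasRightApprox (S : Set C) (d : C) : Prop := ∃ (x : C) (f : x ⟶ d), IsRightApprox S f

def HasLeftApprox (S : Set C) (d : C) : Prop := ∃ (x : C) (f : d ⟶ x), IsLeftApprox S f

def ContravariantlyFiniteIn (S A : Set C) : Prop := ∀ d ∈ A, HasRightApprox S d

def CovariantlyFiniteIn (S A : Set C) : Prop := ∀ d ∈ A, HasLeftApprox S d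

/-- An orthogonal collection (semibrick). -/
structure IsOrthogonal (U : Set C) : Prop where
  nonzero : ∀ u ∈ U, ¬ IsZero u
  hom : ∀ ⦃u v : C⦄, u ∈ U → v ∈ U → ¬ Nonempty (u ≅ v) → ∀ f : u ⟶ v, f = 0
  div : ∀ u ∈ U, ∀ f : u ⟶ u, f = 0 ∨ IsIso f

/-- An `∞`-orthogonal collection. -/
def IsInfOrthogonal (U : Set C) : Prop :=
  IsOrthogonal U ∧ ∀ ⦃u v : C⦄, u ∈ U → v ∈ U → ∀ m : ℤ, 0 < m →
    ∀ f : (shiftFunctor C m).obj u ⟶ v, f = 0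

/-- A simple-minded collection. -/
def IsSMC (U : Set C) : Prop :=
  IsInfOrthogonal U ∧ ∀ d : C, ∃ i j : ℤ, j ≤ i ∧ d ∈ prodDown U i (i - j).toNat

/-- `m` is a right mutation `∂_S(d)` of `d` with respect to `S`. -/
def IsRightMutation (S : Set C) (d m : C) : Prop :=
  (d ∈ S ∧ Nonempty (d ≅ m)) ∨
  (d ∉ S ∧ ∃ (s : C) (f : s ⟶ (shiftFunctor C (1 : ℤ)).obj d)
      (g : (shiftFunctor C (1 : ℤ)).obj d ⟶ m) (h : m ⟶ (shiftFunctor C (1 : ℤ)).obj s),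
    IsRightApprox (extClosure S) f ∧ RightMinimal f ∧ Triangle.mk f g h ∈ (distTriang C))

/-- `m` is a left mutation `∂⁻_S(d)` of `d` with respect to `S`. -/
def IsLeftMutation (S : Set C) (d m : C) : Prop :=
  (d ∈ S ∧ Nonempty (d ≅ m)) ∨
  (d ∉ S ∧ ∃ (s : C) (g : m ⟶ (shiftFunctor C (-1 : ℤ)).obj d)
      (f : (shiftFunctor C (-1 : ℤ)).obj d ⟶ s) (h : s ⟶ (shiftFunctor C (1 : ℤ)).obj m),
    IsLeftApprox (extClosure S) f ∧ LeftMinimal f ∧ Triangle.mk g f h ∈ (distTriang C))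

def rightMutationSet (S U : Set C) : Set C := {m | ∃ u ∈ U, IsRightMutation S u m}

def leftMutationSet (S U : Set C) : Set C := {m | ∃ u ∈ U, IsLeftMutation S u m}

/-- `h` is a simple object of the heart `H`. -/
def IsSimpleIn (H : Set C) (h : C) : Prop :=
  h ∈ H ∧ ¬ IsZero h ∧
    ∀ (a b : C) (f : a ⟶ h) (g : h ⟶ b) (w : b ⟶ (shiftFunctor C (1 : ℤ)).obj a),
      a ∈ H → b ∈ H → Triangle.mk f g w ∈ (distTriang C) → IsZero a ∨ IsZero b

def simplesOf (H : Set C) : Set C := {h | IsSimpleIn H h}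

/-- A heart is a length category iff every object has a finite composition series, i.e.
lies in the extension closure of the simple objects. -/
def HeartIsLength (H : Set C) : Prop := H ⊆ extClosure (simplesOf H)

/-- A bounded t-structure with length heart. -/
def IsLengthHeart (X Y : Set C) : Prop :=
  IsTStructure X Y ∧ IsBoundedTS X Y ∧ HeartIsLength (heart X Y)

/-- An `S`-mutation pair `(A, B)`. -/
def IsSMutationPair (S A B : Set C) : Prop :=
  isoClosure A =
    lPerp S ∩ rPerp S ∩ lPerp (shiftSet S (-1)) ∩ shiftSet (star (extClosure S) B) (-1) ∧
  isoClosure B =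
    lPerp S ∩ rPerp S ∩ rPerp (shiftSet S 1) ∩ shiftSet (star A (extClosure S)) 1

/-- The conditions of the SMC Setup. -/
def SMCSetup (S : Set C) : Prop :=
  CovariantlyFiniteIn (extClosure S)
    {d | ∀ s ∈ S, ∀ m : ℤ, m < 0 → ∀ f : d ⟶ (shiftFunctor C m).obj s, f = 0} ∧
  ContravariantlyFiniteIn (extClosure S)
    {d | ∀ s ∈ S, ∀ m : ℤ, 0 < m → ∀ f : (shiftFunctor C m).obj s ⟶ d, f = 0} ∧
  (∀ d : C, ∃ N : ℤ, ∀ m : ℤ, m ≤ N → ∀ s ∈ S, ∀ f : d ⟶ (shiftFunctor C m).obj s, f = 0) ∧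
  (∀ d : C, ∃ N : ℤ, ∀ m : ℤ, N ≤ m → ∀ s ∈ S, ∀ f : (shiftFunctor C m).obj s ⟶ d, f = 0)

/-- `f : p → h` is an epimorphism in the heart `H`, i.e. fits in a triangle
`a → p → h → a[1]` with `a ∈ H`. -/
def IsEpiIn (H : Set C) {p h : C} (f : p ⟶ h) : Prop :=
  ∃ (a : C) (i : a ⟶ p) (w : h ⟶ (shiftFunctor C (1 : ℤ)).obj a),
    a ∈ H ∧ Triangle.mk i f w ∈ (distTriang C)

/-- `f : h → i` is a monomorphism in the heart `H`. -/
def IsMonoIn (H : Set C) {h i : C} (f : h ⟶ i) : Prop :=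
  ∃ (b : C) (q : i ⟶ b) (w : b ⟶ (shiftFunctor C (1 : ℤ)).obj h),
    b ∈ H ∧ Triangle.mk f q w ∈ (distTriang C)

def IsProjectiveIn (H : Set C) (p : C) : Prop :=
  p ∈ H ∧ ∀ ⦃x y : C⦄ (f : x ⟶ y), x ∈ H → y ∈ H → IsEpiIn H f →
    ∀ g : p ⟶ y, ∃ l : p ⟶ x, l ≫ f = g

def IsInjectiveIn (H : Set C) (i : C) : Prop :=
  i ∈ H ∧ ∀ ⦃x y : C⦄ (f : x ⟶ y), x ∈ H → y ∈ H → IsMonoIn H f →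
    ∀ g : x ⟶ i, ∃ l : y ⟶ i, f ≫ l = g

def EnoughProjectivesIn (H : Set C) : Prop :=
  ∀ h ∈ H, ∃ (p : C) (f : p ⟶ h), IsProjectiveIn H p ∧ IsEpiIn H f

def EnoughInjectivesIn (H : Set C) : Prop :=
  ∀ h ∈ H, ∃ (i : C) (f : h ⟶ i), IsInjectiveIn H i ∧ IsMonoIn H f


/-- Iterated extension product of a finite family of subcategories. -/
def starFin : ∀ n : ℕ, (Fin n → Set C) → Set C
  | 0, _ => {d | IsZero d}
  | n + 1, F => star (F 0) (starFin n fun i => F i.succ)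

/-- A Bridgeland stability condition, given by a stability function `Z` and a locally
finite slicing `P` satisfying the Harder–Narasimhan property and (a consequence of) the
support property: slices over intervals of length `< 1` are length categories. -/
structure StabilityCondition (C : Type u) [Category.{v} C] [Preadditive C]
    [HasZeroObject C] [HasShift C ℤ] [∀ n : ℤ, (shiftFunctor C n).Additive]
    [Pretriangulated C] where
  Z : C → ℂ
  P : ℝ → Set C
  isoP : ∀ φ : ℝ, ∀ ⦃x y : C⦄, (x ≅ y) → x ∈ P φ → y ∈ P φ
  shiftP : ∀ φ : ℝ, P (φ + 1) = shiftSet (P φ) 1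
  homP : ∀ φ ψ : ℝ, ψ < φ → homOrth (P φ) (P ψ)
  hn : ∀ d : C, ∃ (n : ℕ) (φs : Fin n → ℝ), StrictAnti φs ∧
    d ∈ starFin n (fun i => P (φs i))
  additiveZ : ∀ T : Triangle C, T ∈ (distTriang C) → Z T.obj₂ = Z T.obj₁ + Z T.obj₃
  phaseZ : ∀ (φ : ℝ) (d : C), d ∈ P φ → ¬ IsZero d →
    ∃ r : ℝ, 0 < r ∧ Z d = (r : ℂ) * Complex.exp (((Real.pi * φ : ℝ) : ℂ) * Complex.I)
  support : ∀ a b : ℝ, b - a < 1 →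
    HeartIsLength (extClosure (⋃ φ ∈ Set.Icc a b, P φ))


/-!
Write `A = P(0, φ]`. Since `P(1) = ⟨S⟩`, we have `⟨S⟩[-1] = P(0)`, so the tilt is `A * P(0)`,
which clearly lies in `P[0, φ]`. Conversely, an object of `P[0, φ]` admits no nonzero maps from
`P(τ)` for `τ > φ` nor to `P(τ)` for `τ < 0`; peeling off its HN factors from the top, the claim
reduces to `P(ψ) * (A * P(0)) ⊆ A * P(0)` for `0 < ψ ≤ φ`.

Without the octahedral axiom this is done by hand. Given `a → d → b` with `a ∈ P(ψ)` and
`a' → b → b'` with `a' ∈ A`, `b' ∈ P(0)`, let `E` be the fibre of `d → b'` and `G` the cone of the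
induced map `E → a'`. Phase considerations make `a[1]` a direct summand of `G`; its complement
lies in `P[0, φ]` and has central charge `0`, so it vanishes because `Z` sends the nonzero objects
of `P[0, φ]` (with `φ < 1`) into the upper half plane or onto the positive reals. Hence
`E ∈ a * a' ⊆ A`. Finally `P[0, φ]` is a length category by the support property.
-/

lemma mem_lPerp_of_iso {D : Type*} [Category D] [Preadditive D] {T : Set D} {x y : D}
    (e : x ≅ y) (hx : x ∈ lPerp T) : y ∈ lPerp T := by
  intro s hs μ
  rw [← cancel_epi e.hom, comp_zero]
  exact hx s hs _

lemma mem_rPerp_of_iso {D : Type*} [Category D] [Preadditive D] {T : Set D} {x y : D}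
    (e : x ≅ y) (hx : x ∈ rPerp T) : y ∈ rPerp T := by
  intro s hs μ
  rw [← cancel_mono e.inv, zero_comp]
  exact hx s hs _

lemma mem_lPerp_of_triangle {S : Set C} {T : Triangle C} (hT : T ∈ distTriang C)
    (h₁ : T.obj₁ ∈ lPerp S) (h₃ : T.obj₃ ∈ lPerp S) : T.obj₂ ∈ lPerp S := by
  intro s hs μ
  obtain ⟨ν, rfl⟩ := Triangle.yoneda_exact₂ _ hT μ (h₁ s hs _)
  exact (h₃ s hs ν).symm ▸ comp_zero

lemma mem_rPerp_of_triangle {S : Set C} {T : Triangle C} (hT : T ∈ distTriang C)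
    (h₁ : T.obj₁ ∈ rPerp S) (h₃ : T.obj₃ ∈ rPerp S) : T.obj₂ ∈ rPerp S := by
  intro s hs μ
  obtain ⟨ν, rfl⟩ := Triangle.coyoneda_exact₂ _ hT μ (h₃ s hs _)
  exact (h₁ s hs ν).symm ▸ zero_comp

lemma extClosure_subset_lPerp {S T : Set C} (h : S ⊆ lPerp T) : extClosure S ⊆ lPerp T := by
  intro d hd
  induction hd with
  | of s hs => exact h hs
  | zero z hz => exact fun s _ μ => hz.eq_of_src μ 0
  | iso x y e _ ih => exact mem_lPerp_of_iso e ih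
  | ext a d b f g w hT _ _ iha ihb => exact mem_lPerp_of_triangle hT iha ihb

lemma extClosure_subset_rPerp {S T : Set C} (h : S ⊆ rPerp T) : extClosure S ⊆ rPerp T := by
  intro d hd
  induction hd with
  | of s hs => exact h hs
  | zero z hz => exact fun s _ μ => hz.eq_of_tgt μ 0
  | iso x y e _ ih => exact mem_rPerp_of_iso e ih
  | ext a d b f g w hT _ _ iha ihb => exact mem_rPerp_of_triangle hT iha ihb

lemma mem_extClosure_of_triangle {S : Set C} {T : Triangle C} (hT : T ∈ distTriang C)
    (h₁ : T.obj₁ ∈ extClosure S) (h₃ : T.obj₃ ∈ extClosure S) : T.obj₂ ∈ extClosure S :=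
  ExtClosureP.ext _ _ _ T.mor₁ T.mor₂ T.mor₃ hT h₁ h₃

lemma extClosure_mono {S S' : Set C} (h : S ⊆ S') : extClosure S ⊆ extClosure S' := by
  intro d hd
  induction hd with
  | of s hs => exact ExtClosureP.of s (h hs)
  | zero z hz => exact ExtClosureP.zero z hz
  | iso x y e _ ih => exact ExtClosureP.iso x y e ih
  | ext a d b f g w hT _ _ iha ihb => exact ExtClosureP.ext a d b f g w hT iha ihb

lemma starFin_subset_extClosure :
    ∀ (n : ℕ) (F : Fin n → Set C), starFin n F ⊆ extClosure (⋃ i, F i)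
  | 0, _ => fun d hd => ExtClosureP.zero d hd
  | n + 1, F => by
    rintro d ⟨a, b, f, g, w, ha, hb, hT⟩
    refine ExtClosureP.ext a d b f g w hT (ExtClosureP.of a (Set.mem_iUnion_of_mem 0 ha)) ?_
    refine extClosure_mono ?_ (starFin_subset_extClosure n _ hb)
    exact Set.iUnion_subset fun i => Set.subset_iUnion F i.succ

lemma mem_star_of_iso {A B : Set C} {x y : C} (e : x ≅ y) (hx : x ∈ star A B) :
    y ∈ star A B := by
  obtain ⟨a, b, f, g, w, ha, hb, hT⟩ := hx
  refine ⟨a, b, f ≫ e.hom, e.inv ≫ g, w, ha, hb, isomorphic_distinguished _ hT _ ?_⟩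
  exact Triangle.isoMk _ _ (Iso.refl a) e.symm (Iso.refl b)
    (by simp [Triangle.mk]) (by simp [Triangle.mk]) (by simp [Triangle.mk])

lemma isIso_mor₂_of_mor₁_eq_zero {T : Triangle C} (hT : T ∈ distTriang C)
    (hf : T.mor₁ = 0) (hab : ∀ s : T.obj₁⟦(1 : ℤ)⟧ ⟶ T.obj₃, s = 0) : IsIso T.mor₂ := by
  obtain ⟨s, hs⟩ := Triangle.coyoneda_exact₁ _ hT (𝟙 _) (by rw [hf, Functor.map_zero, comp_zero])
  have hw : T.mor₃ = 0 := by rw [← comp_id T.mor₃, hs, hab s, zero_comp, comp_zero]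
  exact (Triangle.isZero₁_iff_isIso₂ _ hT).1 ((Triangle.isZero₁_iff _ hT).2 ⟨hf, hw⟩)

/-- Let `E → d → b'` be the fibre of the composite `d → b → b'` of maps from the triangles
`a → d → b` and `a' → b → b'`, `γ : E → a'` the induced map, and `χ : G → a⟦1⟧` the map induced
on the cone `G` of `γ`. The octahedral axiom would make `χ` an isomorphism; without it, the two
vanishing hypotheses still give a section. -/
lemma exists_section_of_fibre_comparison {a d b a' b' E G : C} {f : a ⟶ d} {g : d ⟶ b}
    {w : b ⟶ a⟦(1 : ℤ)⟧} {f' : a' ⟶ b} {g' : b ⟶ b'} {w' : b' ⟶ a'⟦(1 : ℤ)⟧} {i : E ⟶ d}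
    {k : b' ⟶ E⟦(1 : ℤ)⟧} {γ : E ⟶ a'} {θ : a' ⟶ G} {ω : G ⟶ E⟦(1 : ℤ)⟧} {χ : G ⟶ a⟦(1 : ℤ)⟧}
    (hT : Triangle.mk f g w ∈ distTriang C) (hT₂ : Triangle.mk f' g' w' ∈ distTriang C)
    (hT₃ : Triangle.mk i (g ≫ g') k ∈ distTriang C) (hG : Triangle.mk γ θ ω ∈ distTriang C)
    (hγ : i ≫ g = γ ≫ f') (hχ : ω ≫ i⟦(1 : ℤ)⟧' = χ ≫ (-(f⟦(1 : ℤ)⟧')))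
    (h₁ : ∀ t : a ⟶ b'⟦(-1 : ℤ)⟧, t = 0) (h₂ : ∀ s : a⟦(1 : ℤ)⟧ ⟶ b, s = 0) :
    ∃ ξ : a⟦(1 : ℤ)⟧ ⟶ G, ξ ≫ χ = 𝟙 _ := by
  have hfg : f ≫ g = 0 := comp_distTriang_mor_zero₁₂ _ hT
  obtain ⟨α, hα⟩ : ∃ α : a ⟶ E, f = α ≫ i :=
    Triangle.coyoneda_exact₂ _ hT₃ f (show f ≫ g ≫ g' = 0 by rw [← assoc, hfg, zero_comp])
  have hαγ : α ≫ γ = 0 := by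
    obtain ⟨t, ht⟩ := Triangle.coyoneda_exact₂ _ (inv_rot_of_distTriang _ hT₂) (α ≫ γ)
      (show (α ≫ γ) ≫ f' = 0 by rw [assoc, ← hγ, ← assoc, ← hα, hfg])
    have ht₀ : t = 0 := h₁ t
    rw [ht₀, zero_comp] at ht
    exact ht
  obtain ⟨ξ, hξ⟩ : ∃ ξ : a⟦(1 : ℤ)⟧ ⟶ G, α⟦(1 : ℤ)⟧' = ξ ≫ ω :=
    Triangle.coyoneda_exact₁ _ hG (α⟦(1 : ℤ)⟧')
      (show α⟦(1 : ℤ)⟧' ≫ γ⟦(1 : ℤ)⟧' = 0 by rw [← Functor.map_comp, hαγ, Functor.map_zero])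
  obtain ⟨s, hs⟩ := Triangle.coyoneda_exact₁ _ hT (ξ ≫ χ + 𝟙 _) (by
    change (ξ ≫ χ + 𝟙 _) ≫ f⟦(1 : ℤ)⟧' = 0
    rw [Preadditive.add_comp, id_comp, assoc, ← neg_neg (χ ≫ f⟦(1 : ℤ)⟧'),
      ← Preadditive.comp_neg, ← hχ, Preadditive.comp_neg, ← assoc, ← hξ, ← Functor.map_comp,
      ← hα, neg_add_cancel])
  have hs₀ : s = 0 := h₂ s
  rw [hs₀, zero_comp] at hs
  have hξχ : ξ ≫ χ = -𝟙 _ := eq_neg_of_add_eq_zero_left hs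
  exact ⟨-ξ, by rw [Preadditive.neg_comp, hξχ, neg_neg]⟩

/-- The upper half plane together with the non-negative real axis. A stability function maps
`P[0, φ]`, `φ < 1`, into this set, and `0` is not a sum of nonzero elements of it. -/
def upperHalfPlaneWithNonnegReals : Set ℂ := {z | 0 < z.im ∨ (z.im = 0 ∧ 0 ≤ z.re)}

lemma add_mem_upperHalfPlaneWithNonnegReals {z w : ℂ} (hz : z ∈ upperHalfPlaneWithNonnegReals)
    (hw : w ∈ upperHalfPlaneWithNonnegReals) : z + w ∈ upperHalfPlaneWithNonnegReals := by
  simp only [upperHalfPlaneWithNonnegReals, Set.mem_ofPred_eq, Complex.add_im,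
    Complex.add_re] at *
  rcases hz with hz | ⟨hz, hz'⟩ <;> rcases hw with hw | ⟨hw, hw'⟩
  · exact Or.inl (by linarith)
  · exact Or.inl (by linarith)
  · exact Or.inl (by linarith)
  · exact Or.inr ⟨by linarith, by linarith⟩

lemma eq_zero_of_add_eq_zero_of_mem_upperHalfPlaneWithNonnegReals {z w : ℂ}
    (hz : z ∈ upperHalfPlaneWithNonnegReals) (hw : w ∈ upperHalfPlaneWithNonnegReals)
    (h : z + w = 0) : z = 0 ∧ w = 0 := by
  have him := congrArg Complex.im h
  have hre := congrArg Complex.re h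
  simp only [upperHalfPlaneWithNonnegReals, Set.mem_ofPred_eq] at hz hw
  simp only [Complex.add_im, Complex.add_re, Complex.zero_im, Complex.zero_re] at him hre
  rcases hz with hz | ⟨hz, hz'⟩ <;> rcases hw with hw | ⟨hw, hw'⟩
  · linarith
  · linarith
  · linarith
  · exact ⟨Complex.ext (by simp; linarith) (by simpa), Complex.ext (by simp; linarith) (by simpa)⟩

lemma ofReal_mul_exp_mem_upperHalfPlaneWithNonnegReals {r ψ : ℝ} (hr : 0 < r)
    (hψ : ψ ∈ Set.Ico 0 1) :
    (r : ℂ) * Complex.exp (((Real.pi * ψ : ℝ) : ℂ) * Complex.I) ∈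
      upperHalfPlaneWithNonnegReals := by
  simp only [upperHalfPlaneWithNonnegReals, Set.mem_ofPred_eq, Complex.re_ofReal_mul,
    Complex.im_ofReal_mul, Complex.exp_ofReal_mul_I_re, Complex.exp_ofReal_mul_I_im]
  rcases hψ.1.eq_or_lt with rfl | hψ₀
  · simp [hr.le]
  · exact Or.inl (mul_pos hr (Real.sin_pos_of_pos_of_lt_pi (by positivity)
      (by nlinarith [Real.pi_pos, hψ.2])))

namespace StabilityCondition

variable (σ : StabilityCondition C)

/-- `P(I)`. -/
def slice (I : Set ℝ) : Set C := extClosure (⋃ ψ ∈ I, σ.P ψ)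

lemma Z_eq_zero_of_isZero {z : C} (hz : IsZero z) : σ.Z z = 0 := by
  have hT : Triangle.mk (𝟙 z) (0 : z ⟶ z) (0 : z ⟶ z⟦(1 : ℤ)⟧) ∈ distTriang C :=
    (Triangle.distinguished_iff_of_isZero₃ _ hz).2 (inferInstanceAs (IsIso (𝟙 z)))
  have h : σ.Z z = σ.Z z + σ.Z z := σ.additiveZ _ hT
  simpa using h

open ZeroObject in
lemma Z_congr {x y : C} (e : x ≅ y) : σ.Z x = σ.Z y := by
  have hT : Triangle.mk e.hom (0 : y ⟶ 0) (0 : 0 ⟶ x⟦(1 : ℤ)⟧) ∈ distTriang C :=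
    (Triangle.distinguished_iff_of_isZero₃ _ (isZero_zero C)).2 (inferInstanceAs (IsIso e.hom))
  have h : σ.Z y = σ.Z x + σ.Z 0 := σ.additiveZ _ hT
  rw [h, σ.Z_eq_zero_of_isZero (isZero_zero C), add_zero]

open ZeroObject in
lemma Z_shift (x : C) : σ.Z (x⟦(1 : ℤ)⟧) = - σ.Z x := by
  have h : σ.Z 0 = σ.Z x + σ.Z (x⟦(1 : ℤ)⟧) := σ.additiveZ _ (contractible_distinguished₂ x)
  rw [σ.Z_eq_zero_of_isZero (isZero_zero C)] at h
  linear_combination -h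

lemma shiftSet_P_neg_one (ψ : ℝ) : shiftSet (σ.P (ψ + 1)) (-1) = σ.P ψ := by
  ext x
  constructor
  · rintro ⟨s, hs, ⟨e⟩⟩
    rw [σ.shiftP] at hs
    obtain ⟨s', hs', ⟨e'⟩⟩ := hs
    exact σ.isoP ψ ((shiftEquiv C (1 : ℤ)).unitIso.app s' ≪≫
      (shiftFunctor C (-1 : ℤ)).mapIso e' ≪≫ e) hs'
  · intro hx
    refine ⟨x⟦(1 : ℤ)⟧, ?_, ⟨((shiftEquiv C (1 : ℤ)).unitIso.app x).symm⟩⟩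
    rw [σ.shiftP]
    exact ⟨x, hx, ⟨Iso.refl _⟩⟩

variable {σ}

lemma shift_mem_P {ψ : ℝ} {x : C} (hx : x ∈ σ.P ψ) : x⟦(1 : ℤ)⟧ ∈ σ.P (ψ + 1) := by
  rw [σ.shiftP]
  exact ⟨x, hx, ⟨Iso.refl _⟩⟩

lemma shift_neg_mem_P {ψ : ℝ} {x : C} (hx : x ∈ σ.P (ψ + 1)) : x⟦(-1 : ℤ)⟧ ∈ σ.P ψ :=
  σ.shiftSet_P_neg_one ψ ▸ ⟨x, hx, ⟨Iso.refl _⟩⟩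

lemma P_subset_slice {I : Set ℝ} {ψ : ℝ} (hψ : ψ ∈ I) : σ.P ψ ⊆ σ.slice I :=
  fun x hx => ExtClosureP.of x (Set.mem_biUnion hψ hx)

lemma slice_mono {I J : Set ℝ} (h : I ⊆ J) : σ.slice I ⊆ σ.slice J :=
  extClosure_mono (Set.biUnion_subset_biUnion_left h)

lemma P_subset_lPerp {ψ τ : ℝ} (h : τ < ψ) : σ.P ψ ⊆ lPerp (σ.P τ) :=
  fun _ hx _ hp μ => σ.homP ψ τ h hx hp μ

lemma P_subset_rPerp {ψ τ : ℝ} (h : ψ < τ) : σ.P ψ ⊆ rPerp (σ.P τ) :=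
  fun _ hx _ hp μ => σ.homP τ ψ h hp hx μ

lemma slice_subset_lPerp {I : Set ℝ} {τ : ℝ} (h : ∀ ψ ∈ I, τ < ψ) :
    σ.slice I ⊆ lPerp (σ.P τ) :=
  extClosure_subset_lPerp (Set.iUnion₂_subset fun ψ hψ => P_subset_lPerp (h ψ hψ))

lemma slice_subset_rPerp {I : Set ℝ} {τ : ℝ} (h : ∀ ψ ∈ I, ψ < τ) :
    σ.slice I ⊆ rPerp (σ.P τ) :=
  extClosure_subset_rPerp (Set.iUnion₂_subset fun ψ hψ => P_subset_rPerp (h ψ hψ))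

lemma starFin_subset_slice {n : ℕ} (φs : Fin n → ℝ) :
    starFin n (fun i => σ.P (φs i)) ⊆ σ.slice (Set.range φs) := by
  rw [slice, Set.biUnion_range]
  exact starFin_subset_extClosure n _

lemma shift_mem_lPerp {τ : ℝ} {x : C} (hx : x ∈ lPerp (σ.P (τ - 1))) :
    x⟦(1 : ℤ)⟧ ∈ lPerp (σ.P τ) := by
  intro p hp μ
  rw [← sub_add_cancel τ 1, σ.shiftP] at hp
  obtain ⟨p', hp', ⟨e⟩⟩ := hp
  rw [← cancel_mono e.inv, zero_comp, ← (shiftFunctor C (1 : ℤ)).map_preimage (μ ≫ e.inv),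
    hx p' hp' ((shiftFunctor C (1 : ℤ)).preimage (μ ≫ e.inv)), Functor.map_zero]

lemma isZero_of_mem_starFin_of_mem_lPerp :
    ∀ {n : ℕ} {φs : Fin n → ℝ}, StrictAnti φs → ∀ {d : C},
      d ∈ starFin n (fun i => σ.P (φs i)) → (∀ i, d ∈ lPerp (σ.P (φs i))) → IsZero d
  | 0, _, _, _, hd, _ => hd
  | n + 1, φs, hanti, d, ⟨a, b, f, g, w, ha, hb, hT⟩, hd => by
    have hb₀ : IsZero b := by
      refine isZero_of_mem_starFin_of_mem_lPerp (hanti.comp_strictMono Fin.strictMono_succ) hb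
        fun i => mem_lPerp_of_triangle (rot_of_distTriang _ hT) (hd i.succ)
          (P_subset_lPerp ?_ (shift_mem_P ha))
      exact lt_add_of_lt_of_pos (hanti (Fin.succ_pos i)) one_pos
    have : IsIso f := (Triangle.isZero₃_iff_isIso₁ _ hT).1 hb₀
    rw [IsZero.iff_id_eq_zero]
    exact hd 0 d (σ.isoP _ (asIso f) ha) (𝟙 d)

/-- Induction along the HN filtration of `d`, peeling off the factor of highest phase: the
vanishing conditions force all HN factors of `d` into phases `[lo, hi]`. -/
lemma mem_of_phase_bounds (Q : Set C) {lo hi : ℝ}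
    (hiso : ∀ ⦃x y : C⦄, (x ≅ y) → x ∈ Q → y ∈ Q) (hzero : ∀ z : C, IsZero z → z ∈ Q)
    (hlo : σ.P lo ⊆ Q)
    (hstep : ∀ ψ ∈ Set.Ioc lo hi, ∀ {a d b : C} (f : a ⟶ d) (g : d ⟶ b) (w : b ⟶ a⟦(1 : ℤ)⟧),
      Triangle.mk f g w ∈ distTriang C → a ∈ σ.P ψ → b ∈ Q → d ∈ Q)
    (d : C) (htop : ∀ τ, hi < τ → d ∈ rPerp (σ.P τ)) (hbot : ∀ τ, τ < lo → d ∈ lPerp (σ.P τ)) :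
    d ∈ Q := by
  obtain ⟨n, φs, hanti, hd⟩ := σ.hn d
  induction n generalizing d with
  | zero => exact hzero d hd
  | succ n ih =>
    obtain ⟨a, b, f, g, w, ha, hb, hT⟩ := hd
    have htail : StrictAnti (fun i : Fin n => φs i.succ) :=
      hanti.comp_strictMono Fin.strictMono_succ
    have hlt : ∀ i : Fin n, φs i.succ < φs 0 := fun i => hanti (Fin.succ_pos i)
    have hb_rPerp : ∀ τ, φs 0 ≤ τ → b ∈ rPerp (σ.P τ) := fun τ hτ =>
      slice_subset_rPerp (by rintro _ ⟨i, rfl⟩; linarith [hlt i]) (starFin_subset_slice _ hb)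
    rcases lt_or_ge hi (φs 0) with h_hi | h_hi
    · have : IsIso g := isIso_mor₂_of_mor₁_eq_zero hT (htop _ h_hi a ha f)
        fun s => hb_rPerp (φs 0 + 1) (by linarith) _ (shift_mem_P ha) s
      exact hiso (asIso g).symm <| ih b (fun τ hτ => mem_rPerp_of_iso (asIso g) (htop τ hτ))
        (fun τ hτ => mem_lPerp_of_iso (asIso g) (hbot τ hτ)) _ htail hb
    rcases lt_or_ge (φs 0) lo with h_lo | h_lo
    · exact hzero d <| isZero_of_mem_starFin_of_mem_lPerp hanti ⟨a, b, f, g, w, ha, hb, hT⟩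
        fun i => hbot _ ((hanti.antitone (Fin.zero_le i)).trans_lt h_lo)
    have hb_lPerp : ∀ τ, τ < lo → b ∈ lPerp (σ.P τ) := fun τ hτ =>
      mem_lPerp_of_triangle (rot_of_distTriang _ hT) (hbot τ hτ)
        (P_subset_lPerp (by linarith) (shift_mem_P ha))
    rcases h_lo.eq_or_lt with h_eq | h_lt
    · have hb₀ : IsZero b := isZero_of_mem_starFin_of_mem_lPerp htail hb
        fun i => hb_lPerp _ (h_eq ▸ hlt i)
      have : IsIso f := (Triangle.isZero₃_iff_isIso₁ _ hT).1 hb₀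
      exact hiso (asIso f) (hlo (h_eq ▸ ha))
    · exact hstep (φs 0) ⟨h_lt, h_hi⟩ f g w hT ha
        (ih b (fun τ hτ => hb_rPerp τ (by linarith)) hb_lPerp _ htail hb)

lemma mem_slice_Icc_of_phase_bounds {lo hi : ℝ} (h : lo ≤ hi) {d : C}
    (htop : ∀ τ, hi < τ → d ∈ rPerp (σ.P τ)) (hbot : ∀ τ, τ < lo → d ∈ lPerp (σ.P τ)) :
    d ∈ σ.slice (Set.Icc lo hi) :=
  mem_of_phase_bounds (σ.slice (Set.Icc lo hi)) (fun x y e hx => ExtClosureP.iso x y e hx)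
    (fun z hz => ExtClosureP.zero z hz) (P_subset_slice ⟨le_rfl, h⟩)
    (fun ψ hψ _ _ _ f g w hT ha hb => ExtClosureP.ext _ _ _ f g w hT
      (P_subset_slice (show ψ ∈ Set.Icc lo hi from ⟨hψ.1.le, hψ.2⟩) ha) hb)
    d htop hbot

lemma Z_mem_upperHalfPlaneWithNonnegReals {φ : ℝ} (hφ : φ < 1) {d : C}
    (hd : d ∈ σ.slice (Set.Icc 0 φ)) :
    σ.Z d ∈ upperHalfPlaneWithNonnegReals ∧ (σ.Z d = 0 → IsZero d) := by
  induction hd with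
  | of s hs =>
    obtain ⟨ψ, hψ, hs⟩ := Set.mem_iUnion₂.1 hs
    by_cases hz : IsZero s
    · rw [σ.Z_eq_zero_of_isZero hz]
      exact ⟨Or.inr ⟨rfl, le_rfl⟩, fun _ => hz⟩
    obtain ⟨r, hr, hZ⟩ := σ.phaseZ ψ s hs hz
    rw [hZ]
    exact ⟨ofReal_mul_exp_mem_upperHalfPlaneWithNonnegReals hr ⟨hψ.1, hψ.2.trans_lt hφ⟩,
      fun h => absurd h (mul_ne_zero (by exact_mod_cast hr.ne') (Complex.exp_ne_zero _))⟩
  | zero z hz =>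
    rw [σ.Z_eq_zero_of_isZero hz]
    exact ⟨Or.inr ⟨rfl, le_rfl⟩, fun _ => hz⟩
  | iso x y e _ ih =>
    rw [← σ.Z_congr e]
    exact ⟨ih.1, fun h => (ih.2 h).of_iso e.symm⟩
  | ext a d b f g w hT _ _ iha ihb =>
    rw [show σ.Z d = σ.Z a + σ.Z b from σ.additiveZ _ hT]
    refine ⟨add_mem_upperHalfPlaneWithNonnegReals iha.1 ihb.1, fun h => ?_⟩
    obtain ⟨ha, hb⟩ := eq_zero_of_add_eq_zero_of_mem_upperHalfPlaneWithNonnegReals iha.1 ihb.1 h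
    exact Triangle.isZero₂_of_isZero₁₃ _ hT (iha.2 ha) (ihb.2 hb)

lemma isZero_of_Z_eq_zero {φ : ℝ} (hφ : φ < 1) {d : C} (hd : d ∈ σ.slice (Set.Icc 0 φ))
    (hZ : σ.Z d = 0) : IsZero d :=
  (Z_mem_upperHalfPlaneWithNonnegReals hφ hd).2 hZ

/-- The kernel `V` of `χ` is a direct summand of `G`, so it inherits the phase bounds and lies in
`P[0, φ]`; as `Z V = 0`, it vanishes. -/
lemma isIso_of_section_of_Z_eq {φ : ℝ} (hφ0 : 0 ≤ φ) (hφ1 : φ < 1) {G x : C} (χ : G ⟶ x)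
    (ξ : x ⟶ G) (hξ : ξ ≫ χ = 𝟙 x)
    (htop : ∀ τ, φ < τ → ∀ p ∈ σ.P τ, ∀ ν : p ⟶ G, ν ≫ χ = 0 → ν = 0)
    (hbot : ∀ τ, τ < 0 → G ∈ lPerp (σ.P τ)) (hZ : σ.Z G = σ.Z x) : IsIso χ := by
  obtain ⟨V, j, ε, hV⟩ := distinguished_cocone_triangle₁ χ
  have hjχ : j ≫ χ = 0 := comp_distTriang_mor_zero₁₂ _ hV
  have hχε : χ ≫ ε = 0 := comp_distTriang_mor_zero₂₃ _ hV
  have hε : ε = 0 := by rw [← id_comp ε, ← hξ, assoc, hχε, comp_zero]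
  obtain ⟨r, hr⟩ : ∃ r : G ⟶ V, j ≫ r = 𝟙 V := by
    obtain ⟨e, hj, -⟩ := exists_iso_binaryBiproduct_of_distTriang _ hV hε
    exact ⟨e.hom ≫ biprod.fst, (assoc _ _ _).symm.trans ((hj =≫ biprod.fst).trans biprod.inl_fst)⟩
  have hV_slice : V ∈ σ.slice (Set.Icc 0 φ) := by
    refine mem_slice_Icc_of_phase_bounds hφ0 (fun τ hτ p hp μ => ?_) (fun τ hτ p hp μ => ?_)
    · have hμj : μ ≫ j = 0 := htop τ hτ p hp _ (by rw [assoc, hjχ, comp_zero])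
      rw [← comp_id μ, ← hr, ← assoc, hμj, zero_comp]
    · rw [← id_comp μ, ← hr, assoc, hbot τ hτ p hp (r ≫ μ), comp_zero]
  have hZV : σ.Z V = 0 := by
    have h : σ.Z G = σ.Z V + σ.Z x := σ.additiveZ _ hV
    rw [hZ] at h
    simpa using h
  exact (Triangle.isZero₁_iff_isIso₂ _ hV).1 (isZero_of_Z_eq_zero hφ1 hV_slice hZV)

lemma isIso_of_fibre_comparison {φ : ℝ} (hφ0 : 0 ≤ φ) (hφ1 : φ < 1) {d a' b' E G x : C}
    {i : E ⟶ d} {q : d ⟶ b'} {k : b' ⟶ E⟦(1 : ℤ)⟧} {γ : E ⟶ a'} {θ : a' ⟶ G}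
    {ω : G ⟶ E⟦(1 : ℤ)⟧} {χ : G ⟶ x} {h : x ⟶ d⟦(1 : ℤ)⟧} {ξ : x ⟶ G}
    (hT₃ : Triangle.mk i q k ∈ distTriang C) (hG : Triangle.mk γ θ ω ∈ distTriang C)
    (hχ : ω ≫ i⟦(1 : ℤ)⟧' = χ ≫ h) (hd : d ∈ σ.slice (Set.Icc 0 φ))
    (ha' : a' ∈ σ.slice (Set.Ioc 0 φ)) (hb' : b' ∈ σ.P 0) (hξ : ξ ≫ χ = 𝟙 x)
    (hZ : σ.Z G = σ.Z x) : IsIso χ := by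
  refine isIso_of_section_of_Z_eq hφ0 hφ1 χ ξ hξ (fun τ hτ p hp ν hν => ?_) (fun τ hτ => ?_) hZ
  · obtain ⟨ϑ, hϑ⟩ : ∃ ϑ : p ⟶ b', ν ≫ ω = ϑ ≫ k := Triangle.coyoneda_exact₁ _ hT₃ (ν ≫ ω)
      (show (ν ≫ ω) ≫ i⟦(1 : ℤ)⟧' = 0 by rw [assoc, hχ, ← assoc, hν, zero_comp])
    have hϑ₀ : ϑ = 0 := P_subset_rPerp (by linarith) hb' p hp ϑ
    rw [hϑ₀, zero_comp] at hϑ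
    obtain ⟨μ, hμ⟩ : ∃ μ : p ⟶ a', ν = μ ≫ θ := Triangle.coyoneda_exact₃ _ hG ν hϑ
    have hμ₀ : μ = 0 := slice_subset_rPerp (fun _ hψ => by linarith [hψ.2]) ha' p hp μ
    rw [hμ, hμ₀, zero_comp]
  · have hE₁ : E⟦(1 : ℤ)⟧ ∈ lPerp (σ.P τ) :=
      mem_lPerp_of_triangle (rot_of_distTriang _ (rot_of_distTriang _ hT₃))
        (P_subset_lPerp hτ hb')
        (shift_mem_lPerp (slice_subset_lPerp (fun _ hψ => by linarith [hψ.1]) hd))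
    exact mem_lPerp_of_triangle (rot_of_distTriang _ hG)
      (slice_subset_lPerp (fun _ hψ => by linarith [hψ.1]) ha') hE₁

lemma star_slice_Ioc_P_zero_subset {φ : ℝ} (hφ0 : 0 ≤ φ) :
    star (σ.slice (Set.Ioc 0 φ)) (σ.P 0) ⊆ σ.slice (Set.Icc 0 φ) := by
  rintro d ⟨a, b, f, g, w, ha, hb, hT⟩
  exact ExtClosureP.ext a d b f g w hT (slice_mono Set.Ioc_subset_Icc_self ha)
    (P_subset_slice (show (0 : ℝ) ∈ Set.Icc 0 φ from ⟨le_rfl, hφ0⟩) hb)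

lemma mem_star_of_triangle {φ ψ : ℝ} (hφ1 : φ < 1) (hψ : ψ ∈ Set.Ioc 0 φ)
    {a d b : C} {f : a ⟶ d} {g : d ⟶ b} {w : b ⟶ a⟦(1 : ℤ)⟧}
    (hT : Triangle.mk f g w ∈ distTriang C) (ha : a ∈ σ.P ψ)
    (hb : b ∈ star (σ.slice (Set.Ioc 0 φ)) (σ.P 0)) :
    d ∈ star (σ.slice (Set.Ioc 0 φ)) (σ.P 0) := by
  have hφ0 : 0 ≤ φ := hψ.1.le.trans hψ.2
  have hb_slice := star_slice_Ioc_P_zero_subset hφ0 hb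
  have hd_slice : d ∈ σ.slice (Set.Icc 0 φ) :=
    ExtClosureP.ext a d b f g w hT (P_subset_slice (Set.Ioc_subset_Icc_self hψ) ha) hb_slice
  obtain ⟨a', b', f', g', w', ha', hb', hT₂⟩ := hb
  obtain ⟨E, i, k, hT₃⟩ := distinguished_cocone_triangle₁ (g ≫ g')
  suffices hE : E ∈ σ.slice (Set.Ioc 0 φ) from ⟨E, b', i, g ≫ g', k, hE, hb', hT₃⟩
  obtain ⟨γ, hγ⟩ : ∃ γ : E ⟶ a', i ≫ g = γ ≫ f' := by
    obtain ⟨γ, hγ, -⟩ := complete_distinguished_triangle_morphism₁ _ _ hT₃ hT₂ g (𝟙 b')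
      (comp_id _)
    exact ⟨γ, hγ⟩
  obtain ⟨G, θ, ω, hG⟩ := distinguished_cocone_triangle γ
  obtain ⟨χ, hχ⟩ : ∃ χ : G ⟶ a⟦(1 : ℤ)⟧, ω ≫ i⟦(1 : ℤ)⟧' = χ ≫ (-(f⟦(1 : ℤ)⟧')) := by
    obtain ⟨χ, -, hχ⟩ := complete_distinguished_triangle_morphism _ _ hG
      (rot_of_distTriang _ hT) i f' hγ.symm
    exact ⟨χ, hχ⟩
  obtain ⟨ξ, hξ⟩ := exists_section_of_fibre_comparison hT hT₂ hT₃ hG hγ hχ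
    (fun t => P_subset_lPerp (τ := -1) (by linarith [hψ.1]) ha _
      (shift_neg_mem_P (by rwa [neg_add_cancel])) t)
    (fun s => slice_subset_rPerp (τ := ψ + 1) (fun _ h => by linarith [h.2, hψ.1]) hb_slice _
      (shift_mem_P ha) s)
  have hZ : σ.Z G = σ.Z (a⟦(1 : ℤ)⟧) := by
    have h₁ : σ.Z d = σ.Z a + σ.Z b := σ.additiveZ _ hT
    have h₂ : σ.Z b = σ.Z a' + σ.Z b' := σ.additiveZ _ hT₂
    have h₃ : σ.Z d = σ.Z E + σ.Z b' := σ.additiveZ _ hT₃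
    have h₄ : σ.Z a' = σ.Z E + σ.Z G := σ.additiveZ _ hG
    linear_combination h₃ - h₁ - h₂ - h₄ - σ.Z_shift a
  have : IsIso χ := isIso_of_fibre_comparison hφ0 hφ1 hT₃ hG hχ hd_slice ha' hb' hξ hZ
  have hG₁ : G⟦(-1 : ℤ)⟧ ∈ σ.slice (Set.Ioc 0 φ) :=
    ExtClosureP.iso _ _ ((shiftEquiv C (1 : ℤ)).unitIso.app a ≪≫
      (shiftFunctor C (-1 : ℤ)).mapIso (asIso χ).symm) (P_subset_slice hψ ha)
  exact mem_extClosure_of_triangle (inv_rot_of_distTriang _ hG) hG₁ ha'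

lemma slice_Icc_subset_star {φ : ℝ} (hφ1 : φ < 1) (hzero : ∀ z : C, IsZero z → z ∈ σ.P 0) :
    σ.slice (Set.Icc 0 φ) ⊆ star (σ.slice (Set.Ioc 0 φ)) (σ.P 0) := by
  intro d hd
  refine mem_of_phase_bounds _ (fun x y e hx => mem_star_of_iso e hx)
    (fun z hz => ⟨z, _, 𝟙 z, 0, 0, ExtClosureP.zero z hz, hzero _ (isZero_zero C),
      contractible_distinguished z⟩)
    (fun x hx => ⟨_, x, 0, 𝟙 x, 0, ExtClosureP.zero _ (isZero_zero C), hx,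
      contractible_distinguished₁ x⟩)
    (fun ψ hψ _ _ _ _ _ _ hT ha hb => mem_star_of_triangle hφ1 hψ hT ha hb) d
    (fun τ hτ => slice_subset_rPerp (fun _ h => h.2.trans_lt hτ) hd)
    (fun τ hτ => slice_subset_lPerp (fun _ h => hτ.trans_le h.1) hd)

end StabilityCondition

theorem tilt_length_of_stability_general {X Y : Set C}
    {S : Set C}
    (σ : StabilityCondition C) (φ : ℝ) (hφ0 : 0 < φ) (hφ1 : φ < 1)
    (hP1 : σ.P 1 = extClosure S)
    (hPφ : extClosure (⋃ ψ ∈ Set.Ioc (0 : ℝ) φ, σ.P ψ) = rPerp S ∩ heart X Y) :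
    star (rPerp S ∩ heart X Y) (shiftSet (extClosure S) (-1)) =
      extClosure (⋃ ψ ∈ Set.Icc (0 : ℝ) φ, σ.P ψ) ∧
    HeartIsLength (star (rPerp S ∩ heart X Y) (shiftSet (extClosure S) (-1))) := by
  have hP0 : shiftSet (extClosure S) (-1) = σ.P 0 := by
    rw [← hP1, ← zero_add (1 : ℝ), σ.shiftSet_P_neg_one]
  have hzero : ∀ z : C, IsZero z → z ∈ σ.P 0 := fun z hz =>
    hP0 ▸ ⟨z, ExtClosureP.zero z hz, ⟨((shiftFunctor C (-1 : ℤ)).map_isZero hz).iso hz⟩⟩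
  have hK : star (rPerp S ∩ heart X Y) (shiftSet (extClosure S) (-1)) =
      σ.slice (Set.Icc 0 φ) := by
    rw [← hPφ, hP0]
    exact (StabilityCondition.star_slice_Ioc_P_zero_subset hφ0.le).antisymm
      (StabilityCondition.slice_Icc_subset_star hφ1 hzero)
  exact ⟨hK, hK ▸ σ.support 0 φ (by linarith)⟩

/-- if there is a stability condition with `P(0,1] = H`, `P(1) = ⟨S⟩` and
`P(0,φ] = S^⊥ ∩ H` for some `0 < φ < 1`, then the right simple tilt
`K = (S^⊥ ∩ H) * ⟨S⟩[-1]` equals `P[0,φ]` and is a length heart. -/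
theorem tilt_length_of_stability {X Y : Set C} (hXY : IsLengthHeart X Y)
    (hfin : ∃ F : Set C, F.Finite ∧ simplesOf (heart X Y) ⊆ isoClosure F)
    {S : Set C} (hS : S ⊆ simplesOf (heart X Y))
    (σ : StabilityCondition C) (φ : ℝ) (hφ0 : 0 < φ) (hφ1 : φ < 1)
    (hH : extClosure (⋃ ψ ∈ Set.Ioc (0 : ℝ) 1, σ.P ψ) = heart X Y)
    (hP1 : σ.P 1 = extClosure S)
    (hPφ : extClosure (⋃ ψ ∈ Set.Ioc (0 : ℝ) φ, σ.P ψ) = rPerp S ∩ heart X Y) :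
    star (rPerp S ∩ heart X Y) (shiftSet (extClosure S) (-1)) =
      extClosure (⋃ ψ ∈ Set.Icc (0 : ℝ) φ, σ.P ψ) ∧
    HeartIsLength (star (rPerp S ∩ heart X Y) (shiftSet (extClosure S) (-1))) :=
  tilt_length_of_stability_general σ φ hφ0 hφ1 hP1 hPφ

end SMPaper
end

section
/- Let D be a Hom-finite Krull–Schmidt triangulated category, S an orthogonal collection such that ⟨S⟩ is contravariantly finite in (S[1])^⊥ and covariantly finite in ^⊥(S[-1]), and such that either S is an S_{-1}-subcategory or Hom(S[1], S) = 0. If (A, B) is an S-mutation pair, then A = ∂⁻_S(B) (left mutation) and B = ∂_S(A) (right mutation). -/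
open CategoryTheory Category Limits Pretriangulated

universe v u

namespace SMPaper

variable {C : Type u} [Category.{v} C] [Preadditive C] [HasZeroObject C] [HasShift C ℤ]
  [∀ n : ℤ, (shiftFunctor C n).Additive] [Pretriangulated C]

/-- A Serre functor, encoded via a trace map inducing a perfect pairing
`Hom(x, y) × Hom(y, 𝕊x) → k`. -/
def IsSerreFunctor (k : Type*) [Field k] [Linear k C] (𝕊 : C ⥤ C) : Prop :=
  𝕊.IsEquivalence ∧ ∃ t : ∀ x : C, (x ⟶ 𝕊.obj x) →ₗ[k] k,
    (∀ ⦃x y : C⦄ (f : x ⟶ y), f ≠ 0 → ∃ g : y ⟶ 𝕊.obj x, t x (f ≫ g) ≠ 0) ∧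
    (∀ ⦃x y : C⦄ (g : y ⟶ 𝕊.obj x), g ≠ 0 → ∃ f : x ⟶ y, t x (f ≫ g) ≠ 0)

/-- `S` is an `𝕊_{-1}`-subcategory: stable under `𝕊[1]` and its inverse. -/
def IsSMinusOneStable (𝕊 : C ⥤ C) (S : Set C) : Prop :=
  (∀ s ∈ S, (shiftFunctor C (1 : ℤ)).obj (𝕊.obj s) ∈ S) ∧
  (∀ s ∈ S, ∃ u ∈ S, Nonempty ((shiftFunctor C (1 : ℤ)).obj (𝕊.obj u) ≅ s))

/-!
Each object of `A` or `B` comes with a triangle from `⟨S⟩ * B` or `A * ⟨S⟩`; rotated, it has the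
shape `a → b⟦-1⟧ → s → a⟦1⟧` (resp. `s → a⟦1⟧ → b → s⟦1⟧`) with `s ∈ ⟨S⟩`. The orthogonality
conditions of the mutation pair say that `Hom(a, ⟨S⟩) = Hom(a⟦1⟧, ⟨S⟩) = 0` (resp.
`Hom(⟨S⟩, b) = Hom(⟨S⟩⟦1⟧, b) = 0`), which make `b⟦-1⟧ → s` (resp. `s → a⟦1⟧`) a minimal
`⟨S⟩`-approximation. Minimal approximations, hence mutations, are unique up to isomorphism.
-/

section Perp

variable {S : Set C}

lemma forall_shift_one_hom_eq_zero_iff {a b : C} :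
    (∀ f : a⟦(1 : ℤ)⟧ ⟶ b, f = 0) ↔ ∀ f : a ⟶ b⟦(-1 : ℤ)⟧, f = 0 := by
  let e := (shiftEquiv C (1 : ℤ)).toAdjunction.homEquiv a b
  have he : e 0 = 0 := by simp [e, Adjunction.homEquiv_unit]
  refine ⟨fun h f => ?_, fun h f => ?_⟩
  · rw [← e.apply_symm_apply f, h (e.symm f)]
    exact he
  · rw [← e.symm_apply_apply f, h (e f)]
    exact e.symm_apply_eq.2 he.symm

lemma lPerp_subset_lPerp_extClosure : lPerp S ⊆ lPerp (extClosure S) := by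
  intro a ha u hu
  induction hu with
  | of s hs => exact ha s hs
  | zero z hz => exact fun f => hz.eq_of_tgt f 0
  | iso x y e _ ih => exact fun f => by rw [← cancel_mono e.inv, ih (f ≫ e.inv), zero_comp]
  | ext p d q i j w hT _ _ ihp ihq =>
      intro f
      obtain ⟨g, hg⟩ := Triangle.coyoneda_exact₂ _ hT f (ihq _)
      rw [hg, ihp g]
      exact zero_comp

lemma rPerp_subset_rPerp_extClosure : rPerp S ⊆ rPerp (extClosure S) := by
  intro m hm u hu
  induction hu with
  | of s hs => exact hm s hs
  | zero z hz => exact fun f => hz.eq_of_src f 0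
  | iso x y e _ ih => exact fun f => by rw [← cancel_epi e.hom, ih (e.hom ≫ f), comp_zero]
  | ext p d q i j w hT _ _ ihp ihq =>
      intro f
      obtain ⟨g, hg⟩ := Triangle.yoneda_exact₂ _ hT f (ihp _)
      rw [hg, ihq g]
      exact comp_zero

lemma shift_one_mem_lPerp {a : C} (ha : a ∈ lPerp (shiftSet S (-1))) :
    a⟦(1 : ℤ)⟧ ∈ lPerp S := fun s hs =>
  forall_shift_one_hom_eq_zero_iff.2 (ha _ ⟨s, hs, ⟨Iso.refl _⟩⟩)

lemma shift_neg_one_mem_rPerp {m : C} (hm : m ∈ rPerp (shiftSet S 1)) :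
    m⟦(-1 : ℤ)⟧ ∈ rPerp S := fun s hs =>
  forall_shift_one_hom_eq_zero_iff.1 (hm _ ⟨s, hs, ⟨Iso.refl _⟩⟩)

omit [HasZeroObject C] [HasShift C ℤ] [∀ n : ℤ, (shiftFunctor C n).Additive]
  [Pretriangulated C] in
lemma notMem_of_mem_lPerp (hS : IsOrthogonal S) {a : C} (ha : a ∈ lPerp S) : a ∉ S :=
  fun haS => hS.nonzero a haS ((IsZero.iff_id_eq_zero a).2 (ha a haS (𝟙 a)))

end Perp

section Approximations

variable {W : Set C}

lemma isLeftApprox_of_distTriang {c y s : C} {g : c ⟶ y} {f : y ⟶ s} {h : s ⟶ c⟦(1 : ℤ)⟧}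
    (hT : Triangle.mk g f h ∈ distTriang C) (hs : s ∈ W) (hc : c ∈ lPerp W) :
    IsLeftApprox W f :=
  ⟨hs, fun _ hs' g' => (Triangle.yoneda_exact₂ _ hT g' (hc _ hs' _)).imp fun _ h => h.symm⟩

lemma leftMinimal_of_distTriang {c y s : C} {g : c ⟶ y} {f : y ⟶ s} {h : s ⟶ c⟦(1 : ℤ)⟧}
    (hT : Triangle.mk g f h ∈ distTriang C) (hc : ∀ φ : c⟦(1 : ℤ)⟧ ⟶ s, φ = 0) :
    LeftMinimal f := by
  intro β hβ
  have hf : f ≫ (β - 𝟙 s) = 0 := by rw [Preadditive.comp_sub, comp_id, hβ, sub_self]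
  obtain ⟨δ, hδ⟩ := Triangle.yoneda_exact₂ _ (rot_of_distTriang _ hT) (β - 𝟙 s) hf
  have hβ1 : β = 𝟙 s := sub_eq_zero.1 (hδ.trans (by rw [hc δ]; exact comp_zero))
  rw [hβ1]
  infer_instance

lemma isRightApprox_of_distTriang {s y z : C} {f : s ⟶ y} {g : y ⟶ z} {h : z ⟶ s⟦(1 : ℤ)⟧}
    (hT : Triangle.mk f g h ∈ distTriang C) (hs : s ∈ W) (hz : z ∈ rPerp W) :
    IsRightApprox W f :=
  ⟨hs, fun _ hs' g' => (Triangle.coyoneda_exact₂ _ hT g' (hz _ hs' _)).imp fun _ h => h.symm⟩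

lemma rightMinimal_of_distTriang {s y z : C} {f : s ⟶ y} {g : y ⟶ z} {h : z ⟶ s⟦(1 : ℤ)⟧}
    (hT : Triangle.mk f g h ∈ distTriang C) (hz : ∀ φ : s ⟶ z⟦(-1 : ℤ)⟧, φ = 0) :
    RightMinimal f := by
  intro β hβ
  have hf : (β - 𝟙 s) ≫ f = 0 := by rw [Preadditive.sub_comp, id_comp, hβ, sub_self]
  obtain ⟨δ, hδ⟩ := Triangle.coyoneda_exact₂ _ (inv_rot_of_distTriang _ hT) (β - 𝟙 s) hf
  have hβ1 : β = 𝟙 s := sub_eq_zero.1 (hδ.trans (by rw [hz δ]; exact zero_comp))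
  rw [hβ1]
  infer_instance

end Approximations

section MinimalApproximations

variable {W : Set C}

omit [Preadditive C] [HasZeroObject C] [HasShift C ℤ] [∀ n : ℤ, (shiftFunctor C n).Additive]
  [Pretriangulated C]

lemma isIso_of_isIso_comp_of_isIso_comp {x y : C} (u : x ⟶ y) (v : y ⟶ x)
    [IsIso (u ≫ v)] [IsIso (v ≫ u)] : IsIso u :=
  have : Mono u := mono_of_mono u v
  have : IsSplitEpi u := IsSplitEpi.mk' ⟨inv (v ≫ u) ≫ v, by simp⟩
  isIso_of_mono_of_isSplitEpi u

lemma IsLeftApprox.exists_iso_of_leftMinimal {y s s' : C} {f : y ⟶ s} {f' : y ⟶ s'}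
    (hf : IsLeftApprox W f) (hfm : LeftMinimal f) (hf' : IsLeftApprox W f')
    (hfm' : LeftMinimal f') : ∃ e : s ≅ s', f ≫ e.hom = f' := by
  obtain ⟨u, hu⟩ := hf.2 hf'.1 f'
  obtain ⟨v, hv⟩ := hf'.2 hf.1 f
  have : IsIso (u ≫ v) := hfm _ (by rw [← assoc, hu, hv])
  have : IsIso (v ≫ u) := hfm' _ (by rw [← assoc, hv, hu])
  have := isIso_of_isIso_comp_of_isIso_comp u v
  exact ⟨asIso u, hu⟩

lemma IsRightApprox.exists_iso_of_rightMinimal {y s s' : C} {f : s ⟶ y} {f' : s' ⟶ y}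
    (hf : IsRightApprox W f) (hfm : RightMinimal f) (hf' : IsRightApprox W f')
    (hfm' : RightMinimal f') : ∃ e : s ≅ s', e.hom ≫ f' = f := by
  obtain ⟨u, hu⟩ := hf'.2 hf.1 f
  obtain ⟨v, hv⟩ := hf.2 hf'.1 f'
  have : IsIso (u ≫ v) := hfm _ (by rw [assoc, hv, hu])
  have : IsIso (v ≫ u) := hfm' _ (by rw [assoc, hu, hv])
  have := isIso_of_isIso_comp_of_isIso_comp u v
  exact ⟨asIso u, hu⟩

end MinimalApproximations

section Triangles

lemma distinguished_of_iso_obj₁ {T : Triangle C} (hT : T ∈ distTriang C) {a : C}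
    (e : T.obj₁ ≅ a) :
    Triangle.mk (e.inv ≫ T.mor₁) T.mor₂ (T.mor₃ ≫ e.hom⟦(1 : ℤ)⟧') ∈ distTriang C := by
  refine isomorphic_distinguished _ hT _
    (Triangle.isoMk _ _ e.symm (Iso.refl _) (Iso.refl _) ?_ ?_ ?_) <;> simp [Triangle.mk]

lemma distinguished_of_iso_obj₂ {T : Triangle C} (hT : T ∈ distTriang C) {a : C}
    (e : T.obj₂ ≅ a) :
    Triangle.mk (T.mor₁ ≫ e.hom) (e.inv ≫ T.mor₂) T.mor₃ ∈ distTriang C := by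
  refine isomorphic_distinguished _ hT _
    (Triangle.isoMk _ _ (Iso.refl _) e.symm (Iso.refl _) ?_ ?_ ?_) <;> simp [Triangle.mk]

lemma distinguished_of_iso_obj₃ {T : Triangle C} (hT : T ∈ distTriang C) {a : C}
    (e : T.obj₃ ≅ a) :
    Triangle.mk T.mor₁ (T.mor₂ ≫ e.hom) (e.inv ≫ T.mor₃) ∈ distTriang C := by
  refine isomorphic_distinguished _ hT _
    (Triangle.isoMk _ _ (Iso.refl _) (Iso.refl _) e.symm ?_ ?_ ?_) <;> simp [Triangle.mk]

lemma nonempty_iso_obj₁_of_distTriang {x x' y s s' : C} {g : x ⟶ y} {f : y ⟶ s}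
    {h : s ⟶ x⟦(1 : ℤ)⟧} {g' : x' ⟶ y} {f' : y ⟶ s'} {h' : s' ⟶ x'⟦(1 : ℤ)⟧}
    (hT : Triangle.mk g f h ∈ distTriang C) (hT' : Triangle.mk g' f' h' ∈ distTriang C)
    (e : s ≅ s') (he : f ≫ e.hom = f') : Nonempty (x ≅ x') := by
  obtain ⟨e', -⟩ := exists_iso_of_arrow_iso _ _ (rot_of_distTriang _ hT)
    (rot_of_distTriang _ hT') (Arrow.isoMk (Iso.refl y) e ((id_comp f').trans he.symm))
  exact ⟨(shiftFunctor C (1 : ℤ)).preimageIso (Triangle.π₃.mapIso e')⟩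

lemma nonempty_iso_obj₃_of_distTriang {s s' y z z' : C} {f : s ⟶ y} {g : y ⟶ z}
    {h : z ⟶ s⟦(1 : ℤ)⟧} {f' : s' ⟶ y} {g' : y ⟶ z'} {h' : z' ⟶ s'⟦(1 : ℤ)⟧}
    (hT : Triangle.mk f g h ∈ distTriang C) (hT' : Triangle.mk f' g' h' ∈ distTriang C)
    (e : s ≅ s') (he : e.hom ≫ f' = f) : Nonempty (z ≅ z') := by
  obtain ⟨e', -⟩ := exists_iso_of_arrow_iso _ _ hT hT'
    (Arrow.isoMk e (Iso.refl y) (he.trans (comp_id f).symm))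
  exact ⟨Triangle.π₃.mapIso e'⟩

variable {X Y : Set C}

lemma exists_distTriang_obj₁_of_mem_shiftSet_neg_one {a : C}
    (ha : a ∈ shiftSet (star X Y) (-1)) :
    ∃ s ∈ X, ∃ b ∈ Y, ∃ (g : a ⟶ b⟦(-1 : ℤ)⟧) (f : b⟦(-1 : ℤ)⟧ ⟶ s) (h : s ⟶ a⟦(1 : ℤ)⟧),
      Triangle.mk g f h ∈ distTriang C := by
  obtain ⟨x, ⟨s, b, _, _, _, hs, hb, hT⟩, ⟨e⟩⟩ := ha
  exact ⟨s, hs, b, hb, _, _, _,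
    distinguished_of_iso_obj₁ (inv_rot_of_distTriang _ (inv_rot_of_distTriang _ hT)) e⟩

lemma exists_distTriang_obj₂_of_mem_shiftSet_neg_one {a : C}
    (ha : a ∈ shiftSet (star X Y) (-1)) :
    ∃ s ∈ X, ∃ b ∈ Y, ∃ (f : s ⟶ a⟦(1 : ℤ)⟧) (g : a⟦(1 : ℤ)⟧ ⟶ b) (h : b ⟶ s⟦(1 : ℤ)⟧),
      Triangle.mk f g h ∈ distTriang C := by
  obtain ⟨x, ⟨s, b, _, _, _, hs, hb, hT⟩, ⟨e⟩⟩ := ha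
  exact ⟨s, hs, b, hb, _, _, _,
    distinguished_of_iso_obj₂ hT ((shiftNegShift x (1 : ℤ)).symm ≪≫ (shiftFunctor C 1).mapIso e)⟩

lemma exists_distTriang_obj₂_of_mem_shiftSet_one {b : C} (hb : b ∈ shiftSet (star X Y) 1) :
    ∃ a ∈ X, ∃ s ∈ Y, ∃ (g : a ⟶ b⟦(-1 : ℤ)⟧) (f : b⟦(-1 : ℤ)⟧ ⟶ s) (h : s ⟶ a⟦(1 : ℤ)⟧),
      Triangle.mk g f h ∈ distTriang C := by
  obtain ⟨x, ⟨a, s, _, _, _, ha, hs, hT⟩, ⟨e⟩⟩ := hb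
  exact ⟨a, ha, s, hs, _, _, _, distinguished_of_iso_obj₂ hT
    ((shiftShiftNeg x (1 : ℤ)).symm ≪≫ (shiftFunctor C (-1)).mapIso e)⟩

lemma exists_distTriang_obj₃_of_mem_shiftSet_one {m : C} (hm : m ∈ shiftSet (star X Y) 1) :
    ∃ a ∈ X, ∃ s ∈ Y, ∃ (f : s ⟶ a⟦(1 : ℤ)⟧) (g : a⟦(1 : ℤ)⟧ ⟶ m) (h : m ⟶ s⟦(1 : ℤ)⟧),
      Triangle.mk f g h ∈ distTriang C := by
  obtain ⟨x, ⟨a, s, _, _, _, ha, hs, hT⟩, ⟨e⟩⟩ := hm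
  exact ⟨a, ha, s, hs, _, _, _,
    distinguished_of_iso_obj₃ (rot_of_distTriang _ (rot_of_distTriang _ hT)) e⟩

end Triangles

section Mutations

variable {S : Set C}

lemma IsLeftMutation.nonempty_iso {d m m' : C} (h : IsLeftMutation S d m)
    (h' : IsLeftMutation S d m') : Nonempty (m ≅ m') := by
  rcases h with ⟨hd, ⟨e⟩⟩ | ⟨hd, _, _, _, _, hf, hfm, hT⟩ <;>
    rcases h' with ⟨hd', ⟨e'⟩⟩ | ⟨hd', _, _, _, _, hf', hfm', hT'⟩
  · exact ⟨e.symm ≪≫ e'⟩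
  · exact absurd hd hd'
  · exact absurd hd' hd
  · obtain ⟨e, he⟩ := hf.exists_iso_of_leftMinimal hfm hf' hfm'
    exact nonempty_iso_obj₁_of_distTriang hT hT' e he

lemma IsRightMutation.nonempty_iso {d m m' : C} (h : IsRightMutation S d m)
    (h' : IsRightMutation S d m') : Nonempty (m ≅ m') := by
  rcases h with ⟨hd, ⟨e⟩⟩ | ⟨hd, _, _, _, _, hf, hfm, hT⟩ <;>
    rcases h' with ⟨hd', ⟨e'⟩⟩ | ⟨hd', _, _, _, _, hf', hfm', hT'⟩
  · exact ⟨e.symm ≪≫ e'⟩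
  · exact absurd hd hd'
  · exact absurd hd' hd
  · obtain ⟨e, he⟩ := hf.exists_iso_of_rightMinimal hfm hf' hfm'
    exact nonempty_iso_obj₃_of_distTriang hT hT' e he

lemma isLeftMutation_of_distTriang (hS : IsOrthogonal S) {a b s : C} {g : a ⟶ b⟦(-1 : ℤ)⟧}
    {f : b⟦(-1 : ℤ)⟧ ⟶ s} {h : s ⟶ a⟦(1 : ℤ)⟧} (hT : Triangle.mk g f h ∈ distTriang C)
    (hs : s ∈ extClosure S) (hb : b ∈ lPerp S) (ha : a ∈ lPerp S)
    (ha' : a ∈ lPerp (shiftSet S (-1))) : IsLeftMutation S b a :=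
  Or.inr ⟨notMem_of_mem_lPerp hS hb, s, g, f, h,
    isLeftApprox_of_distTriang hT hs (lPerp_subset_lPerp_extClosure ha),
    leftMinimal_of_distTriang hT (lPerp_subset_lPerp_extClosure (shift_one_mem_lPerp ha') s hs),
    hT⟩

lemma isRightMutation_of_distTriang (hS : IsOrthogonal S) {a m s : C} {f : s ⟶ a⟦(1 : ℤ)⟧}
    {g : a⟦(1 : ℤ)⟧ ⟶ m} {h : m ⟶ s⟦(1 : ℤ)⟧} (hT : Triangle.mk f g h ∈ distTriang C)
    (hs : s ∈ extClosure S) (ha : a ∈ lPerp S) (hm : m ∈ rPerp S)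
    (hm' : m ∈ rPerp (shiftSet S 1)) : IsRightMutation S a m :=
  Or.inr ⟨notMem_of_mem_lPerp hS ha, s, f, g, h,
    isRightApprox_of_distTriang hT hs (rPerp_subset_rPerp_extClosure hm),
    rightMinimal_of_distTriang hT
      (rPerp_subset_rPerp_extClosure (shift_neg_one_mem_rPerp hm') s hs),
    hT⟩

end Mutations

namespace IsSMutationPair

variable {S A B : Set C}

lemma fst_subset (hAB : IsSMutationPair S A B) :
    A ⊆ lPerp S ∩ rPerp S ∩ lPerp (shiftSet S (-1)) ∩ shiftSet (star (extClosure S) B) (-1) :=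
  hAB.1 ▸ fun a ha => ⟨a, ha, ⟨Iso.refl a⟩⟩

lemma snd_subset (hAB : IsSMutationPair S A B) :
    B ⊆ lPerp S ∩ rPerp S ∩ rPerp (shiftSet S 1) ∩ shiftSet (star A (extClosure S)) 1 :=
  hAB.2 ▸ fun b hb => ⟨b, hb, ⟨Iso.refl b⟩⟩

lemma isoClosure_fst_eq (hS : IsOrthogonal S) (hAB : IsSMutationPair S A B) :
    isoClosure A = leftMutationSet S B := by
  apply Set.Subset.antisymm
  · rw [hAB.1]
    rintro a ⟨⟨⟨haS, -⟩, haS'⟩, ha⟩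
    obtain ⟨s, hs, b, hb, g, f, h, hT⟩ := exists_distTriang_obj₁_of_mem_shiftSet_neg_one ha
    exact ⟨b, hb, isLeftMutation_of_distTriang hS hT hs (hAB.snd_subset hb).1.1.1 haS haS'⟩
  · rintro m ⟨b, hb, hm⟩
    obtain ⟨⟨⟨hbS, -⟩, -⟩, hb'⟩ := hAB.snd_subset hb
    obtain ⟨a, ha, s, hs, g, f, h, hT⟩ := exists_distTriang_obj₂_of_mem_shiftSet_one hb'
    obtain ⟨⟨⟨haS, -⟩, haS'⟩, -⟩ := hAB.fst_subset ha
    obtain ⟨e⟩ := hm.nonempty_iso (isLeftMutation_of_distTriang hS hT hs hbS haS haS')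
    exact ⟨a, ha, ⟨e.symm⟩⟩

lemma isoClosure_snd_eq (hS : IsOrthogonal S) (hAB : IsSMutationPair S A B) :
    isoClosure B = rightMutationSet S A := by
  apply Set.Subset.antisymm
  · rw [hAB.2]
    rintro m ⟨⟨⟨-, hmS⟩, hmS'⟩, hm⟩
    obtain ⟨a, ha, s, hs, f, g, h, hT⟩ := exists_distTriang_obj₃_of_mem_shiftSet_one hm
    exact ⟨a, ha, isRightMutation_of_distTriang hS hT hs (hAB.fst_subset ha).1.1.1 hmS hmS'⟩
  · rintro m ⟨a, ha, hm⟩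
    obtain ⟨⟨⟨haS, -⟩, -⟩, ha'⟩ := hAB.fst_subset ha
    obtain ⟨s, hs, b, hb, f, g, h, hT⟩ := exists_distTriang_obj₂_of_mem_shiftSet_neg_one ha'
    obtain ⟨⟨⟨-, hbS⟩, hbS'⟩, -⟩ := hAB.snd_subset hb
    obtain ⟨e⟩ := hm.nonempty_iso (isRightMutation_of_distTriang hS hT hs haS hbS hbS')
    exact ⟨b, hb, ⟨e.symm⟩⟩

end IsSMutationPair

/-- if `(A, B)` is an `S`-mutation pair, then `A = ∂⁻_S(B)` and
`B = ∂_S(A)`. -/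
theorem mutation_pair_gives_mutations (k : Type*) [Field k] [Linear k C]
    [∀ x y : C, Module.Finite k (x ⟶ y)] [IsIdempotentComplete C]
    {S : Set C} (hS : IsOrthogonal S)
    (hcontra : ContravariantlyFiniteIn (extClosure S) (rPerp (shiftSet S 1)))
    (hco : CovariantlyFiniteIn (extClosure S) (lPerp (shiftSet S (-1))))
    (hcase : (∃ 𝕊 : C ⥤ C, IsSerreFunctor k 𝕊 ∧ IsSMinusOneStable 𝕊 S) ∨
      homOrth (shiftSet S 1) S)
    {A B : Set C} (hAB : IsSMutationPair S A B) :
    isoClosure A = leftMutationSet S B ∧ isoClosure B = rightMutationSet S A :=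
  ⟨hAB.isoClosure_fst_eq hS, hAB.isoClosure_snd_eq hS⟩
end SMPaper
end

section
/- Let (X, Y) be a t-structure on a triangulated category D with heart H, and let (T, F) be a torsion pair in H. If (X, Y) admits a right adjacent co-t-structure (i.e. Y is contravariantly finite in D) and F is contravariantly finite in H, then the right HRS-tilted t-structure (X * T[-1], (F * Y)[-1]) also admits a right adjacent co-t-structure, i.e. F * Y is contravariantly finite in D. -/
open CategoryTheory Category Limits Pretriangulated

universe v u

namespace SMPaper

variable {C : Type u} [Category.{v} C] [Preadditive C] [HasZeroObject C] [HasShift C ℤ]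
  [∀ n : ℤ, (shiftFunctor C n).Additive] [Pretriangulated C]

/-!
Shifting a right `Y`-approximation of `d⟦-1⟧` gives a right `Y⟦1⟧`-approximation `y⟦1⟧ → d`.
Since the heart lies in `Y⟦1⟧` and `Hom(X, Y) = 0`, composing it with the `X`-truncation
`x → y⟦1⟧`, which lies in the heart, gives a right approximation of `d` by the heart; composing
further with right `F`-approximations inside the heart gives one by `F`. Finally, as in
Iyama–Yoshino, if `f → d → w → f⟦1⟧` is a triangle on a right `F`-approximation of `d` and
`y → w` is a right `Y`-approximation, then the extension `f → e → y` classified by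
`y → w → f⟦1⟧` maps to `d` by a right `F * Y`-approximation.
-/

omit [HasZeroObject C] [Pretriangulated C] in
lemma eq_zero_of_forall_shift_hom_eq_zero {x z : C} (h : ∀ g : x⟦(1 : ℤ)⟧ ⟶ z, g = 0)
    (f : x ⟶ z⟦(-1 : ℤ)⟧) : f = 0 := by
  apply (shiftFunctor C (1 : ℤ)).map_injective
  rw [Functor.map_zero, ← cancel_mono (shiftNegShift z (1 : ℤ)).hom, zero_comp]
  exact h _

lemma exists_mor₁_comp_eq (T : Triangle C) (hT : T ∈ distTriang C) {z : C} (f : T.obj₁ ⟶ z)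
    (hf : T.mor₃ ≫ f⟦(1 : ℤ)⟧' = 0) : ∃ g : T.obj₂ ⟶ z, T.mor₁ ≫ g = f := by
  obtain ⟨g, hg, -⟩ := complete_distinguished_triangle_morphism₂ _ _ hT
    (contractible_distinguished z) f 0 (hf.trans zero_comp.symm)
  exact ⟨g, hg.trans (comp_id f)⟩

section Approximation

variable {S A B : Set C}

omit [Preadditive C] [HasZeroObject C] [HasShift C ℤ] [∀ n : ℤ, (shiftFunctor C n).Additive]
  [Pretriangulated C] in
lemma IsRightApprox.comp {x' x d : C} {s : x' ⟶ x} {a : x ⟶ d} (hs : IsRightApprox S s)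
    (ha : IsRightApprox A a) (hSA : S ⊆ A) : IsRightApprox S (s ≫ a) := by
  refine ⟨hs.1, fun x'' hx'' g => ?_⟩
  obtain ⟨h, rfl⟩ := ha.2 (hSA hx'') g
  obtain ⟨h', rfl⟩ := hs.2 hx'' h
  exact ⟨h', (assoc _ _ _).symm⟩

omit [Preadditive C] [HasZeroObject C] [HasShift C ℤ] [∀ n : ℤ, (shiftFunctor C n).Additive]
  [Pretriangulated C] in
lemma ContravariantlyFiniteIn.trans (hS : ContravariantlyFiniteIn S A)
    (hA : ContravariantlyFiniteIn A B) (hSA : S ⊆ A) : ContravariantlyFiniteIn S B := by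
  intro d hd
  obtain ⟨x, a, ha⟩ := hA d hd
  obtain ⟨x', s, hs⟩ := hS x ha.1
  exact ⟨x', s ≫ a, hs.comp ha hSA⟩

omit [Preadditive C] [HasZeroObject C] [∀ n : ℤ, (shiftFunctor C n).Additive] [Pretriangulated C] in
lemma IsRightApprox.shift {y d : C} {g : y ⟶ d⟦(-1 : ℤ)⟧} (hg : IsRightApprox S g) :
    IsRightApprox (shiftSet S 1) (g⟦(1 : ℤ)⟧' ≫ (shiftNegShift d (1 : ℤ)).hom) := by
  refine ⟨⟨y, hg.1, ⟨Iso.refl _⟩⟩, ?_⟩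
  rintro x' ⟨s, hs, ⟨ι⟩⟩ a
  obtain ⟨h, hh⟩ := hg.2 hs
    ((shiftFunctor C (1 : ℤ)).preimage (ι.hom ≫ a ≫ (shiftNegShift d (1 : ℤ)).inv))
  refine ⟨ι.inv ≫ h⟦(1 : ℤ)⟧', ?_⟩
  rw [assoc, ← Functor.map_comp_assoc, hh, Functor.map_preimage]
  simp only [assoc, Iso.inv_hom_id, comp_id, Iso.inv_hom_id_assoc]

end Approximation

namespace IsTStructure

variable {X Y : Set C}

lemma shift_one_mem (hXY : IsTStructure X Y) {x : C} (hx : x ∈ X) : x⟦(1 : ℤ)⟧ ∈ X :=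
  hXY.shift ⟨x, hx, ⟨Iso.refl _⟩⟩

lemma shift_hom_eq_zero (hXY : IsTStructure X Y) {x y : C} (hx : x ∈ X) (hy : y ∈ Y) (n : ℤ)
    (f : x⟦n⟧ ⟶ y⟦n⟧) : f = 0 := by
  rw [← (shiftFunctor C n).map_preimage f, hXY.hom hx hy ((shiftFunctor C n).preimage f),
    Functor.map_zero]

lemma mem_right_of_hom_eq_zero (hXY : IsTStructure X Y) {z : C}
    (h : ∀ x ∈ X, ∀ f : x ⟶ z, f = 0) : z ∈ Y := by
  obtain ⟨x, y, u, v, w, hx, hy, hT⟩ := hXY.gen z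
  have hx₁ : IsZero (x⟦(1 : ℤ)⟧) := by
    obtain ⟨k, hk⟩ : ∃ k : x⟦(1 : ℤ)⟧ ⟶ y, 𝟙 _ = k ≫ w :=
      Triangle.coyoneda_exact₁ _ hT (𝟙 _) (by
        change 𝟙 _ ≫ u⟦(1 : ℤ)⟧' = 0
        rw [h x hx u, Functor.map_zero, comp_zero])
    rw [IsZero.iff_id_eq_zero, hk, hXY.hom (hXY.shift_one_mem hx) hy k, zero_comp]
  have hx₀ : IsZero x :=
    ((shiftFunctor C (-1 : ℤ)).map_isZero hx₁).of_iso (shiftShiftNeg x (1 : ℤ)).symm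
  have : IsIso v := (Triangle.isZero₁_iff_isIso₂ _ hT).1 hx₀
  exact hXY.isoY (asIso v).symm hy

lemma shift_neg_one_mem_right (hXY : IsTStructure X Y) {y : C} (hy : y ∈ Y) :
    y⟦(-1 : ℤ)⟧ ∈ Y :=
  hXY.mem_right_of_hom_eq_zero fun _ hx =>
    eq_zero_of_forall_shift_hom_eq_zero fun g => hXY.hom (hXY.shift_one_mem hx) hy g

lemma mem_shiftSet_right_of_hom_eq_zero (hXY : IsTStructure X Y) {z : C}
    (h : ∀ x ∈ X, ∀ g : x⟦(1 : ℤ)⟧ ⟶ z, g = 0) : z ∈ shiftSet Y 1 :=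
  ⟨z⟦(-1 : ℤ)⟧,
    hXY.mem_right_of_hom_eq_zero fun x hx => eq_zero_of_forall_shift_hom_eq_zero (h x hx),
    ⟨shiftNegShift z (1 : ℤ)⟩⟩

lemma mem_heart_of_distTriang (hXY : IsTStructure X Y) {x y₁ y : C} {u : x ⟶ y₁⟦(1 : ℤ)⟧}
    {v : y₁⟦(1 : ℤ)⟧ ⟶ y} {w : y ⟶ x⟦(1 : ℤ)⟧} (hT : Triangle.mk u v w ∈ distTriang C)
    (hx : x ∈ X) (hy₁ : y₁ ∈ Y) (hy : y ∈ Y) : x ∈ heart X Y := by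
  refine ⟨hx, hXY.mem_shiftSet_right_of_hom_eq_zero fun x' hx' ψ => ?_⟩
  obtain ⟨s, rfl⟩ := Triangle.coyoneda_exact₂ _ (inv_rot_of_distTriang _ hT) ψ
    (hXY.shift_hom_eq_zero hx' hy₁ 1 _)
  rw [hXY.hom (hXY.shift_one_mem hx') (hXY.shift_neg_one_mem_right hy) s]
  exact zero_comp

lemma heart_contravariantlyFinite (hXY : IsTStructure X Y)
    (hY : ContravariantlyFiniteIn Y Set.univ) : ContravariantlyFiniteIn (heart X Y) Set.univ := by
  intro d _
  obtain ⟨y₁, g, hg⟩ := hY (d⟦(-1 : ℤ)⟧) trivial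
  obtain ⟨x, y, u, v, w, hx, hy, hT⟩ := hXY.gen (y₁⟦(1 : ℤ)⟧)
  refine ⟨x, u ≫ g⟦(1 : ℤ)⟧' ≫ (shiftNegShift d (1 : ℤ)).hom,
    hXY.mem_heart_of_distTriang hT hx hg.1 hy, fun h hh a => ?_⟩
  obtain ⟨c, rfl⟩ := hg.shift.2 hh.2 a
  obtain ⟨b, rfl⟩ : ∃ b : h ⟶ x, c = b ≫ u :=
    Triangle.coyoneda_exact₂ _ hT c (hXY.hom hh.1 hy _)
  exact ⟨b, (assoc _ _ _).symm⟩

end IsTStructure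

section Star

variable {A B : Set C} {a d w y e : C} {φ : a ⟶ d} {π : d ⟶ w} {δ : w ⟶ a⟦(1 : ℤ)⟧}
  {g : y ⟶ w} {κ : a ⟶ e} {p : e ⟶ y} {ε : e ⟶ d}

lemma exists_lift_of_mem_right (hd : Triangle.mk φ π δ ∈ distTriang C)
    (hg : IsRightApprox B g) (he : Triangle.mk κ p (g ≫ δ) ∈ distTriang C) (hκε : κ ≫ ε = φ)
    (hεπ : ε ≫ π = p ≫ g) {y' : C} (hy' : y' ∈ B) (γ : y' ⟶ d) : ∃ β : y' ⟶ e, β ≫ ε = γ := by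
  have hπδ : π ≫ δ = 0 := comp_distTriang_mor_zero₂₃ _ hd
  obtain ⟨ς, hς⟩ := hg.2 hy' (γ ≫ π)
  obtain ⟨β₀, rfl⟩ : ∃ β₀ : y' ⟶ e, ς = β₀ ≫ p := Triangle.coyoneda_exact₃ _ he ς (by
    change ς ≫ g ≫ δ = 0
    rw [← assoc, hς, assoc, hπδ, comp_zero])
  obtain ⟨ξ, hξ⟩ : ∃ ξ : y' ⟶ a, γ - β₀ ≫ ε = ξ ≫ φ := Triangle.coyoneda_exact₂ _ hd _ (by
    change (γ - β₀ ≫ ε) ≫ π = 0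
    rw [Preadditive.sub_comp, assoc, hεπ, ← assoc, hς, sub_self])
  refine ⟨β₀ + ξ ≫ κ, ?_⟩
  rw [Preadditive.add_comp, assoc, hκε, ← hξ]
  abel

lemma exists_extension_of_mem_right (hd : Triangle.mk φ π δ ∈ distTriang C)
    (hg : IsRightApprox B g) (he : Triangle.mk κ p (g ≫ δ) ∈ distTriang C) {a' e' y' : C}
    {i' : a' ⟶ e'} {p' : e' ⟶ y'} {w' : y' ⟶ a'⟦(1 : ℤ)⟧}
    (hT' : Triangle.mk i' p' w' ∈ distTriang C) (hy' : y' ∈ B) {θ : a' ⟶ a} {α : e' ⟶ d}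
    (hθ : θ ≫ φ = i' ≫ α) : ∃ β : e' ⟶ e, i' ≫ β = θ ≫ κ := by
  have hw'i' : w' ≫ i'⟦(1 : ℤ)⟧' = 0 := comp_distTriang_mor_zero₃₁ _ hT'
  have hδκ : (g ≫ δ) ≫ κ⟦(1 : ℤ)⟧' = 0 := comp_distTriang_mor_zero₃₁ _ he
  obtain ⟨ϱ, hϱ⟩ : ∃ ϱ : y' ⟶ w, w' ≫ θ⟦(1 : ℤ)⟧' = ϱ ≫ δ :=
    Triangle.coyoneda_exact₁ _ hd _ (by
      change (w' ≫ θ⟦(1 : ℤ)⟧') ≫ φ⟦(1 : ℤ)⟧' = 0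
      rw [assoc, ← Functor.map_comp, hθ, Functor.map_comp, ← assoc, hw'i', zero_comp])
  obtain ⟨ς, rfl⟩ := hg.2 hy' ϱ
  refine exists_mor₁_comp_eq _ hT' (θ ≫ κ) ?_
  change w' ≫ (θ ≫ κ)⟦(1 : ℤ)⟧' = 0
  rw [Functor.map_comp, ← assoc, hϱ, assoc, assoc, ← assoc g, hδκ, comp_zero]

lemma isRightApprox_star (hφ : IsRightApprox A φ) (hd : Triangle.mk φ π δ ∈ distTriang C)
    (hg : IsRightApprox B g) (he : Triangle.mk κ p (g ≫ δ) ∈ distTriang C) (hκε : κ ≫ ε = φ)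
    (hεπ : ε ≫ π = p ≫ g) : IsRightApprox (star A B) ε := by
  refine ⟨⟨a, y, κ, p, g ≫ δ, hφ.1, hg.1, he⟩, ?_⟩
  rintro e' ⟨a', y', i', p', w', ha', hy', hT'⟩ α
  obtain ⟨θ, hθ⟩ := hφ.2 ha' (i' ≫ α)
  obtain ⟨β, hβ⟩ := exists_extension_of_mem_right hd hg he hT' hy' hθ
  obtain ⟨γ, hγ⟩ : ∃ γ : y' ⟶ d, α - β ≫ ε = p' ≫ γ := Triangle.yoneda_exact₂ _ hT' _ (by
    change i' ≫ (α - β ≫ ε) = 0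
    rw [Preadditive.comp_sub, ← assoc, hβ, assoc, hκε, hθ, sub_self])
  obtain ⟨β', hβ'⟩ := exists_lift_of_mem_right hd hg he hκε hεπ hy' γ
  refine ⟨β + p' ≫ β', ?_⟩
  rw [Preadditive.add_comp, assoc, hβ', ← hγ]
  abel

lemma ContravariantlyFiniteIn.star (hA : ContravariantlyFiniteIn A Set.univ)
    (hB : ContravariantlyFiniteIn B Set.univ) : ContravariantlyFiniteIn (star A B) Set.univ := by
  intro d _
  obtain ⟨a, φ, hφ⟩ := hA d trivial
  obtain ⟨w, π, δ, hd⟩ := distinguished_cocone_triangle φ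
  obtain ⟨y, g, hg⟩ := hB w trivial
  obtain ⟨e, κ, p, he⟩ := distinguished_cocone_triangle₂ (g ≫ δ)
  obtain ⟨ε, hκε, hεπ⟩ : ∃ ε : e ⟶ d, κ ≫ ε = 𝟙 a ≫ φ ∧ p ≫ g = ε ≫ π :=
    complete_distinguished_triangle_morphism₂ _ _ he hd (𝟙 a) g (by
      change (g ≫ δ) ≫ (𝟙 a)⟦(1 : ℤ)⟧' = g ≫ δ
      rw [CategoryTheory.Functor.map_id, comp_id])
  exact ⟨e, ε, isRightApprox_star hφ hd hg he (hκε.trans (id_comp φ)) hεπ.symm⟩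

end Star

/-- if `(X, Y)` admits a right adjacent co-t-structure (`Y` is
contravariantly finite in `D`) and the torsionfree class `F` is contravariantly finite
in the heart `H`, then the right HRS tilt also admits a right adjacent co-t-structure,
i.e. `F * Y` is contravariantly finite in `D`. -/
theorem tilt_preserves_right_adjacent {X Y T F : Set C} (hXY : IsTStructure X Y)
    (hTF : IsTorsionPairIn (heart X Y) T F)
    (hY : ContravariantlyFiniteIn Y Set.univ)
    (hF : ContravariantlyFiniteIn F (heart X Y)) :
    ContravariantlyFiniteIn (star F Y) Set.univ :=
  (hF.trans (hXY.heart_contravariantlyFinite hY) hTF.subF).star hY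

end SMPaper
end
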